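/- Fix t ∈ ℝ and suppose A(a; θ(t)) ≠ 0 for every a ∈ A; let n₊ = |{a ∈ A : A(a; θ(t)) > 0}|. If θ : ℝ → ℝ^A is differentiable at t and satisfies the RPG dynamics θ̇_b(t) = n₊ · π(b; θ(t)) · A(b; θ(t)) for all b ∈ A, then the induced policy trajectory satisfies d/dt π(a; θ(t)) = n₊ · π(a; θ(t)) · (π(a; θ(t)) A(a; θ(t)) − ∑_{b∈A} π(b; θ(t))² A(b; θ(t))) for every a ∈ A. -/

import Mathlib

/-- The softmax policy `π(a; θ) = exp θ_a / ∑_b exp θ_b`. -/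
noncomputable def softmax {A : Type*} [Fintype A] (θ : A → ℝ) (a : A) : ℝ :=
  Real.exp (θ a) / ∑ b, Real.exp (θ b)

open Finset

theorem sum_softmax_mul {A : Type*} [Fintype A] (θ x : A → ℝ) :
    ∑ b, softmax θ b * x b = (∑ b, Real.exp (θ b) * x b) / ∑ b, Real.exp (θ b) := by
  simp only [softmax, sum_div, div_mul_eq_mul_div]

/-- The softmax Jacobian `∂π_a/∂θ_b = π_a (δ_ab - π_b)`, applied along a curve. -/
theorem hasDerivAt_softmax {A : Type*} [Fintype A] {θ : ℝ → A → ℝ} {θ' : A → ℝ} {t : ℝ}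
    (hθ : HasDerivAt θ θ' t) (a : A) :
    HasDerivAt (fun s => softmax (θ s) a)
      (softmax (θ t) a * (θ' a - ∑ b, softmax (θ t) b * θ' b)) t := by
  have hexp (b : A) : HasDerivAt (fun s => Real.exp (θ s b)) (Real.exp (θ t b) * θ' b) t :=
    (hasDerivAt_pi.mp hθ b).exp
  have hS : ∑ b, Real.exp (θ t b) ≠ 0 :=
    (sum_pos (fun b _ => Real.exp_pos _) ⟨a, mem_univ a⟩).ne'
  refine ((hexp a).div (HasDerivAt.fun_sum fun b _ => hexp b) hS).congr_deriv ?_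
  rw [sum_softmax_mul, softmax]
  field_simp

theorem stmt12_general {A : Type*} [Fintype A]
    (q : A → ℝ) (θ : ℝ → A → ℝ) (θdot : A → ℝ) (t : ℝ) (n : ℕ)
    (hθ : HasDerivAt θ θdot t)
    (hdyn : ∀ b : A,
      θdot b = (n : ℝ) * (softmax (θ t) b * (q b - ∑ c, softmax (θ t) c * q c))) :
    ∀ a : A,
      HasDerivAt (fun s => softmax (θ s) a)
        ((n : ℝ) * (softmax (θ t) a *
          (softmax (θ t) a * (q a - ∑ c, softmax (θ t) c * q c) -
            ∑ b, (softmax (θ t) b) ^ 2 * (q b - ∑ c, softmax (θ t) c * q c)))) t := by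
  intro a
  have hdrift : ∑ b, softmax (θ t) b * θdot b =
      n * ∑ b, softmax (θ t) b ^ 2 * (q b - ∑ c, softmax (θ t) c * q c) := by
    simp only [hdyn, mul_sum]
    exact sum_congr rfl fun b _ => by ring
  refine (hasDerivAt_softmax hθ a).congr_deriv ?_
  rw [hdrift, hdyn a]
  ring

/-- fix `t` and suppose the advantage `A(a; θ(t)) = q a − ∑_c π(c; θ(t)) q c`
is nonzero for every `a`; let `n₊ = |{a : A(a; θ(t)) > 0}|`. If `θ : ℝ → ℝ^A` is
differentiable at `t` and satisfies the RPG dynamics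
`θ̇_b(t) = n₊ · π(b; θ(t)) A(b; θ(t))` for all `b`, then
`d/dt π(a; θ(t)) = n₊ · π(a; θ(t)) (π(a; θ(t)) A(a; θ(t)) − ∑_b π(b; θ(t))² A(b; θ(t)))`
for every `a`. -/
theorem stmt12 {A : Type*} [Fintype A] [Nonempty A]
    (q : A → ℝ) (θ : ℝ → A → ℝ) (θdot : A → ℝ) (t : ℝ) (n : ℕ)
    (hadv : ∀ a : A, q a - ∑ c, softmax (θ t) c * q c ≠ 0)
    (hn : n = Nat.card {a : A // 0 < q a - ∑ c, softmax (θ t) c * q c})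
    (hθ : HasDerivAt θ θdot t)
    (hdyn : ∀ b : A,
      θdot b = (n : ℝ) * (softmax (θ t) b * (q b - ∑ c, softmax (θ t) c * q c))) :
    ∀ a : A,
      HasDerivAt (fun s => softmax (θ s) a)
        ((n : ℝ) * (softmax (θ t) a *
          (softmax (θ t) a * (q a - ∑ c, softmax (θ t) c * q c) -
            ∑ b, (softmax (θ t) b) ^ 2 * (q b - ∑ c, softmax (θ t) c * q c)))) t :=
  stmt12_general q θ θdot t n hθ hdyn
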